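/- Successive flat tetrahedrons of a local trajectory are connected via a common face containing a long edge (upward step): for every a ∈ ℤ⁴ and pairwise distinct i,j,k ∈ {1,2,3,4}, the intersection π(T(a;i,j,k)) ∩ π(T(a−e_k;k,i,j)) equals the projected triangle π(conv{a, a+eᵢ, a+eᵢ+eⱼ}); moreover this common face contains the edge from π(a) to π(a+eᵢ+eⱼ), which has length 1 (a long edge of both tetrahedrons). -/

import Mathlib

noncomputable section

/-- Ambient space ℝ⁴. -/
abbrev E4 := EuclideanSpace ℝ (Fin 4)

/-- Standard basis vector eᵢ of ℝ⁴. -/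
def ee4 (i : Fin 4) : E4 := EuclideanSpace.single i 1

/-- 𝟙 = e₁ + e₂ + e₃ + e₄. -/
def ones4 : E4 := ∑ i, ee4 i

/-- Orthogonal projection π onto the hyperplane H = {v ∈ ℝ⁴ : v₁+v₂+v₃+v₄ = 0},
    given by π(v) = v − ((v₁+v₂+v₃+v₄)/4)·𝟙. -/
def proj4 (v : E4) : E4 := v - ((∑ i, v i) / 4) • ones4

/-- A lattice point of ℤ⁴ viewed in ℝ⁴. -/
def toE4 (a : Fin 4 → ℤ) : E4 := WithLp.toLp 2 (fun n => (a n : ℝ))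

/-- Slant tetrahedron T(a;i,j,k) = conv{a, a+eᵢ, a+eᵢ+eⱼ, a+eᵢ+eⱼ+e_k}. -/
def slant4 (a : Fin 4 → ℤ) (i j k : Fin 4) : Set E4 :=
  convexHull ℝ {toE4 a, toE4 a + ee4 i, toE4 a + ee4 i + ee4 j,
    toE4 a + ee4 i + ee4 j + ee4 k}

/-- Flat tetrahedron: the image π(T(a;i,j,k)). -/
def flat4 (a : Fin 4 → ℤ) (i j k : Fin 4) : Set E4 := proj4 '' slant4 a i j k

/-!
Let `l` be the index different from `i`, `j`, `k`. The functional `v ↦ v k - v l` is unchanged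
by `π`, since `π` subtracts the same multiple of `𝟙` from every coordinate. It equals
`c = a k - a l` on the triangle `{a, a + eᵢ, a + eᵢ + eⱼ}` shared by both slant tetrahedra, is
`c + 1` at the fourth vertex `a + eᵢ + eⱼ + e_k` of `T(a;i,j,k)` and `c - 1` at the fourth vertex
`a - e_k` of `T(a - e_k;k,i,j)`. So the two tetrahedra lie on opposite sides of the hyperplane
`{v k - v l = c}`, and a point common to their projections has a preimage in the first tetrahedron
on that hyperplane, i.e. in the triangle. The long edge projects to `π(eᵢ + eⱼ)`, whose four
coordinates are `±1/2`.
-/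

section Face

variable {E F : Type*} [AddCommGroup E] [Module ℝ E]

lemma mem_convexHull_of_mem_convexHull_insert_of_apply_eq (f : E →ₗ[ℝ] ℝ) {S : Set E}
    {w y : E} {c : ℝ} (hS : ∀ v ∈ S, f v = c) (hw : c < f w)
    (hy : y ∈ convexHull ℝ (insert w S)) (hyc : f y = c) : y ∈ convexHull ℝ S := by
  rcases S.eq_empty_or_nonempty with rfl | hSne
  · simp only [insert_empty_eq, convexHull_singleton, Set.mem_singleton_iff] at hy
    subst hy
    linarith
  rw [convexHull_insert hSne, mem_convexJoin] at hy
  obtain ⟨x, hx, z, hz, u, t, -, -, hut, rfl⟩ := hy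
  rw [Set.mem_singleton_iff] at hx
  subst x
  have hzc : f z = c := convexHull_min hS (convex_hyperplane f.isLinear c) hz
  have hu : u = 0 := by
    simp only [map_add, map_smul, smul_eq_mul, hzc] at hyc
    have : u * (f w - c) = 0 := by linear_combination hyc - c * hut
    exact (mul_eq_zero.1 this).resolve_right (sub_pos.2 hw).ne'
  simpa [hu, show t = 1 by linarith] using hz

lemma image_convexHull_insert_inter_image_convexHull_insert (g : E → F) (f : E →ₗ[ℝ] ℝ)
    (hfg : ∀ x y, g x = g y → f x = f y) {S : Set E} {w₁ w₂ : E} {c : ℝ}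
    (hS : ∀ v ∈ S, f v = c) (hw₁ : c < f w₁) (hw₂ : f w₂ ≤ c) :
    g '' convexHull ℝ (insert w₁ S) ∩ g '' convexHull ℝ (insert w₂ S) =
      g '' convexHull ℝ S := by
  refine subset_antisymm ?_ (Set.subset_inter
    (Set.image_mono (convexHull_mono (Set.subset_insert _ _)))
    (Set.image_mono (convexHull_mono (Set.subset_insert _ _))))
  rintro _ ⟨⟨y₁, hy₁, rfl⟩, y₂, hy₂, hy⟩
  have h₁ : c ≤ f y₁ :=
    convexHull_min (t := {x | c ≤ f x}) (Set.insert_subset hw₁.le fun v hv => (hS v hv).ge)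
      (convex_halfSpace_ge f.isLinear c) hy₁
  have h₂ : f y₂ ≤ c :=
    convexHull_min (t := {x | f x ≤ c}) (Set.insert_subset hw₂ fun v hv => (hS v hv).le)
      (convex_halfSpace_le f.isLinear c) hy₂
  have hy₁c : f y₁ = c := le_antisymm (hfg y₂ y₁ hy ▸ h₂) h₁
  exact ⟨y₁, mem_convexHull_of_mem_convexHull_insert_of_apply_eq f hS hw₁ hy₁ hy₁c, rfl⟩

end Face

lemma ones4_apply (m : Fin 4) : ones4 m = 1 := by
  fin_cases m <;> simp [ones4, ee4, Fin.sum_univ_four]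

lemma proj4_apply (v : E4) (m : Fin 4) : proj4 v m = v m - (∑ n, v n) / 4 := by
  simp [proj4, ones4_apply]

lemma isLinearMap_proj4 : IsLinearMap ℝ proj4 where
  map_add x y := by
    ext m
    simp only [proj4_apply, PiLp.add_apply, Finset.sum_add_distrib]
    ring
  map_smul r x := by
    ext m
    simp only [proj4_apply, PiLp.smul_apply, smul_eq_mul, ← Finset.mul_sum]
    ring

def coordDiff (k l : Fin 4) : E4 →ₗ[ℝ] ℝ :=
  (EuclideanSpace.proj k - EuclideanSpace.proj l : E4 →L[ℝ] ℝ)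

lemma coordDiff_apply (k l : Fin 4) (v : E4) : coordDiff k l v = v k - v l := rfl

lemma coordDiff_proj4 (k l : Fin 4) (v : E4) : coordDiff k l (proj4 v) = coordDiff k l v := by
  simp only [coordDiff_apply, proj4_apply]
  ring

lemma coordDiff_ee4 (k l m : Fin 4) :
    coordDiff k l (ee4 m) = (if k = m then 1 else 0) - (if l = m then 1 else 0) := by
  simp [coordDiff_apply, ee4]

lemma toE4_sub_single (a : Fin 4 → ℤ) (k : Fin 4) :
    toE4 (a - Pi.single k 1) = toE4 a - ee4 k := by
  ext m
  by_cases h : m = k <;> simp [toE4, ee4, Pi.single_apply, h]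

lemma norm_proj4_ee4_add_ee4 {i j : Fin 4} (hij : i ≠ j) : ‖proj4 (ee4 i + ee4 j)‖ = 1 := by
  have hsum : ∑ n, (ee4 i + ee4 j) n = 2 := by
    norm_num [ee4, Finset.sum_add_distrib]
  have hsq : ∀ m, ‖proj4 (ee4 i + ee4 j) m‖ ^ 2 = 1 / 4 := by
    intro m
    rw [proj4_apply, hsum, Real.norm_eq_abs, sq_abs]
    by_cases hi : m = i
    · subst hi
      norm_num [ee4, hij]
    · by_cases hj : m = j <;> norm_num [ee4, hi, hj, hij.symm]
  rw [EuclideanSpace.norm_eq, Finset.sum_congr rfl fun m _ => hsq m]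
  norm_num
lemma slant4_eq_convexHull_insert (a : Fin 4 → ℤ) (i j k : Fin 4) :
    slant4 a i j k = convexHull ℝ (insert (toE4 a + ee4 i + ee4 j + ee4 k)
      {toE4 a, toE4 a + ee4 i, toE4 a + ee4 i + ee4 j}) := by
  rw [slant4]
  congr 1
  ext
  simp only [Set.mem_insert_iff, Set.mem_singleton_iff]
  tauto

lemma slant4_sub_single_eq_convexHull_insert (a : Fin 4 → ℤ) (i j k : Fin 4) :
    slant4 (a - Pi.single k 1) k i j = convexHull ℝ (insert (toE4 a - ee4 k)
      {toE4 a, toE4 a + ee4 i, toE4 a + ee4 i + ee4 j}) := by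
  rw [slant4, toE4_sub_single, sub_add_cancel]

/-- upward step: π(T(a;i,j,k)) ∩ π(T(a−e_k;k,i,j)) equals the
projected triangle π(conv{a, a+eᵢ, a+eᵢ+eⱼ}); this common face contains the
long edge from π(a) to π(a+eᵢ+eⱼ), of length 1. -/
theorem stmt14 (a : Fin 4 → ℤ) (i j k : Fin 4)
    (hij : i ≠ j) (hik : i ≠ k) (hjk : j ≠ k) :
    flat4 a i j k ∩ flat4 (a - Pi.single k 1) k i j =
      proj4 '' convexHull ℝ {toE4 a, toE4 a + ee4 i, toE4 a + ee4 i + ee4 j} ∧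
    segment ℝ (proj4 (toE4 a)) (proj4 (toE4 a + ee4 i + ee4 j)) ⊆
      proj4 '' convexHull ℝ {toE4 a, toE4 a + ee4 i, toE4 a + ee4 i + ee4 j} ∧
    dist (proj4 (toE4 a)) (proj4 (toE4 a + ee4 i + ee4 j)) = 1 := by
  obtain ⟨l, hli, hlj, hlk⟩ : ∃ l, l ≠ i ∧ l ≠ j ∧ l ≠ k := by
    revert i j k; decide
  set S : Set E4 := {toE4 a, toE4 a + ee4 i, toE4 a + ee4 i + ee4 j}
  have hS : ∀ v ∈ S, coordDiff k l v = coordDiff k l (toE4 a) := by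
    rintro v (rfl | rfl | rfl) <;> simp [coordDiff_ee4, hik.symm, hjk.symm, hli, hlj]
  refine ⟨?_, ?_, ?_⟩
  · rw [flat4, flat4, slant4_eq_convexHull_insert, slant4_sub_single_eq_convexHull_insert]
    refine image_convexHull_insert_inter_image_convexHull_insert proj4 (coordDiff k l)
      (fun x y h => by rw [← coordDiff_proj4, h, coordDiff_proj4]) hS ?_ ?_ <;>
      simp [coordDiff_ee4, hik.symm, hjk.symm, hli, hlj, hlk]
  · exact ((convex_convexHull ℝ S).is_linear_image isLinearMap_proj4).segment_subset
      ⟨_, subset_convexHull ℝ S (by simp [S]), rfl⟩ ⟨_, subset_convexHull ℝ S (by simp [S]), rfl⟩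
  · rw [dist_eq_norm', add_assoc, isLinearMap_proj4.map_add, add_sub_cancel_left,
      norm_proj4_ee4_add_ee4 hij]
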